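/- Let m ≥ 2, let P₁, …, P_m be n×n real symmetric positive definite matrices with Pⱼ ⪯ γ̄·I for all j and some γ̄ > 0, and let ω₁, …, ω_m be weights with 0 ≤ ωⱼ ≤ 1/(m − 1) for every j and Σⱼ ωⱼ = 1. Set P_Γ = Σⱼ ωⱼ Pⱼ. Then the multi-sensor inverse-covariance-intersection information matrix satisfies Σⱼ (Pⱼ)⁻¹ − (m − 1)·(P_Γ)⁻¹ ⪰ (1/γ̄)·I; in particular it is symmetric positive definite, and the fused covariance P̂ = (Σⱼ (Pⱼ)⁻¹ − (m − 1)·(P_Γ)⁻¹)⁻¹ satisfies P̂ ⪯ γ̄·I. (Theorem 1, diffusion-update bound for the multi-fusion ICI rule, with the weight restriction ωⱼ ≤ 1/(m−1) making the bound precise.) -/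

import Mathlib

/-!
For positive definite `A`, `x ⬝ A⁻¹ x = max_y (2 x ⬝ y - y ⬝ A y)`, attained at `y = A⁻¹ x`.
This makes `A ↦ x ⬝ A⁻¹ x` convex and inversion antitone in the Loewner order. With
`qⱼ = x ⬝ Pⱼ⁻¹ x ≥ |x|² / γ̄`, convexity bounds the quadratic form of the fused information
matrix below by `Σⱼ (1 - (m - 1) ωⱼ) qⱼ`. The coefficients sum to `1` and are nonnegative
precisely because `ωⱼ ≤ 1 / (m - 1)`, so the form is at least `|x|² / γ̄`; inverting this
bound gives `P̂ ⪯ γ̄ I`.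
-/

def Matrix.Loewner {n : ℕ} (M N : Matrix (Fin n) (Fin n) ℝ) : Prop :=
  (N - M).PosSemidef

namespace Matrix

section QuadraticForm

variable {ι κ : Type*} [Fintype κ]

lemma posDef_sum_smul {P : κ → Matrix ι ι ℝ} (hP : ∀ j, (P j).PosDef) {ω : κ → ℝ}
    (hω0 : ∀ j, 0 ≤ ω j) (hωsum : 0 < ∑ j, ω j) : (∑ j, ω j • P j).PosDef := by
  classical
  obtain ⟨i, -, hi⟩ := Finset.exists_lt_of_sum_lt (f := 0) (g := ω) (by simpa using hωsum)
  rw [← Finset.add_sum_erase _ _ (Finset.mem_univ i)]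
  exact ((hP i).smul hi).add_posSemidef
    (posSemidef_sum _ fun j _ => (hP j).posSemidef.smul (hω0 j))

variable [Fintype ι]

lemma IsHermitian.dotProduct_mulVec_comm {A : Matrix ι ι ℝ} (hA : A.IsHermitian)
    (x y : ι → ℝ) : x ⬝ᵥ A *ᵥ y = y ⬝ᵥ A *ᵥ x := by
  rw [dotProduct_mulVec, ← mulVec_transpose, show Aᵀ = A from hA, dotProduct_comm]

variable [DecidableEq ι]

lemma PosDef.mulVec_inv_mulVec {A : Matrix ι ι ℝ} (hA : A.PosDef) (x : ι → ℝ) :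
    A *ᵥ A⁻¹ *ᵥ x = x := by
  rw [mulVec_mulVec, mul_nonsing_inv _ ((isUnit_iff_isUnit_det A).mp hA.isUnit), one_mulVec]

lemma smul_one_inv {c : ℝ} (hc : c ≠ 0) : (c • 1 : Matrix ι ι ℝ)⁻¹ = c⁻¹ • 1 :=
  inv_eq_left_inv (by rw [smul_mul_smul, inv_mul_cancel₀ hc, one_mul, one_smul])

lemma dotProduct_smul_one_mulVec (c : ℝ) (x : ι → ℝ) :
    x ⬝ᵥ (c • 1 : Matrix ι ι ℝ) *ᵥ x = c * (x ⬝ᵥ x) := by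
  rw [smul_mulVec, one_mulVec, dotProduct_smul, smul_eq_mul]

lemma PosDef.two_mul_dotProduct_sub_le {A : Matrix ι ι ℝ} (hA : A.PosDef) (x y : ι → ℝ) :
    2 * (x ⬝ᵥ y) - y ⬝ᵥ A *ᵥ y ≤ x ⬝ᵥ A⁻¹ *ᵥ x := by
  set w := A⁻¹ *ᵥ x
  have hAw : A *ᵥ w = x := hA.mulVec_inv_mulVec x
  have hsq := hA.posSemidef.dotProduct_mulVec_nonneg (y - w)
  rw [star_trivial, mulVec_sub, dotProduct_sub, sub_dotProduct, sub_dotProduct, hAw,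
    hA.isHermitian.dotProduct_mulVec_comm w y, hAw, dotProduct_comm w x,
    dotProduct_comm y x] at hsq
  linarith

lemma PosDef.dotProduct_inv_mulVec_eq {A : Matrix ι ι ℝ} (hA : A.PosDef) (x : ι → ℝ) :
    x ⬝ᵥ A⁻¹ *ᵥ x = 2 * (x ⬝ᵥ A⁻¹ *ᵥ x) - (A⁻¹ *ᵥ x) ⬝ᵥ A *ᵥ A⁻¹ *ᵥ x := by
  rw [hA.mulVec_inv_mulVec, dotProduct_comm _ x]
  ring

/-- The maximiser `y` of the variational formula for `Σ ωⱼ Pⱼ` is a competitor for each `Pⱼ`. -/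
lemma dotProduct_inv_sum_smul_mulVec_le {P : κ → Matrix ι ι ℝ} (hP : ∀ j, (P j).PosDef)
    {ω : κ → ℝ} (hω0 : ∀ j, 0 ≤ ω j) (hωsum : ∑ j, ω j = 1) (x : ι → ℝ) :
    x ⬝ᵥ (∑ j, ω j • P j)⁻¹ *ᵥ x ≤ ∑ j, ω j * (x ⬝ᵥ (P j)⁻¹ *ᵥ x) := by
  have hQ := posDef_sum_smul hP hω0 (hωsum ▸ one_pos)
  set y := (∑ j, ω j • P j)⁻¹ *ᵥ x
  calc x ⬝ᵥ (∑ j, ω j • P j)⁻¹ *ᵥ x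
      = 2 * (x ⬝ᵥ y) - y ⬝ᵥ (∑ j, ω j • P j) *ᵥ y := hQ.dotProduct_inv_mulVec_eq x
    _ = ∑ j, ω j * (2 * (x ⬝ᵥ y) - y ⬝ᵥ P j *ᵥ y) := by
      simp only [mul_sub, Finset.sum_sub_distrib, ← Finset.sum_mul, hωsum, one_mul, sum_mulVec,
        dotProduct_sum, smul_mulVec, dotProduct_smul, smul_eq_mul]
    _ ≤ ∑ j, ω j * (x ⬝ᵥ (P j)⁻¹ *ᵥ x) := Finset.sum_le_sum fun j _ =>
      mul_le_mul_of_nonneg_left ((hP j).two_mul_dotProduct_sub_le x y) (hω0 j)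

/-- The ICI fused information matrix, the number `m` of local estimates being `Fintype.card κ`. -/
noncomputable def iciInfo (P : κ → Matrix ι ι ℝ) (ω : κ → ℝ) : Matrix ι ι ℝ :=
  ∑ j, (P j)⁻¹ - ((Fintype.card κ : ℝ) - 1) • (∑ j, ω j • P j)⁻¹

lemma isHermitian_iciInfo {P : κ → Matrix ι ι ℝ} (hP : ∀ j, (P j).PosDef) {ω : κ → ℝ}
    (hω0 : ∀ j, 0 ≤ ω j) (hωsum : ∑ j, ω j = 1) : (iciInfo P ω).IsHermitian :=
  (isSelfAdjoint_sum _ fun j _ => (hP j).inv.isHermitian).sub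
    ((posDef_sum_smul hP hω0 (hωsum ▸ one_pos)).inv.isHermitian.smul (IsSelfAdjoint.all _))

lemma dotProduct_iciInfo_mulVec (P : κ → Matrix ι ι ℝ) (ω : κ → ℝ) (x : ι → ℝ) :
    x ⬝ᵥ iciInfo P ω *ᵥ x = ∑ j, x ⬝ᵥ (P j)⁻¹ *ᵥ x
      - ((Fintype.card κ : ℝ) - 1) * (x ⬝ᵥ (∑ j, ω j • P j)⁻¹ *ᵥ x) := by
  simp only [iciInfo, sub_mulVec, sum_mulVec, smul_mulVec, dotProduct_sub, dotProduct_sum,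
    dotProduct_smul, smul_eq_mul]

end QuadraticForm

section Loewner

variable {n : ℕ}

lemma loewner_iff {M N : Matrix (Fin n) (Fin n) ℝ} (hM : M.IsHermitian) (hN : N.IsHermitian) :
    Loewner M N ↔ ∀ x, x ⬝ᵥ M *ᵥ x ≤ x ⬝ᵥ N *ᵥ x := by
  simp only [Loewner, posSemidef_iff_dotProduct_mulVec, hN.sub hM, true_and, star_trivial,
    sub_mulVec, dotProduct_sub, sub_nonneg]

lemma Loewner.posDef {A B : Matrix (Fin n) (Fin n) ℝ} (h : Loewner A B) (hA : A.PosDef) :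
    B.PosDef := by
  simpa using hA.add_posSemidef h

lemma Loewner.inv_anti {A B : Matrix (Fin n) (Fin n) ℝ} (h : Loewner A B) (hA : A.PosDef) :
    Loewner B⁻¹ A⁻¹ := by
  have hB := h.posDef hA
  have hAB := (loewner_iff hA.isHermitian hB.isHermitian).mp h
  rw [loewner_iff hB.inv.isHermitian hA.inv.isHermitian]
  intro x
  calc x ⬝ᵥ B⁻¹ *ᵥ x = 2 * (x ⬝ᵥ B⁻¹ *ᵥ x) - (B⁻¹ *ᵥ x) ⬝ᵥ B *ᵥ B⁻¹ *ᵥ x :=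
        hB.dotProduct_inv_mulVec_eq x
    _ ≤ 2 * (x ⬝ᵥ B⁻¹ *ᵥ x) - (B⁻¹ *ᵥ x) ⬝ᵥ A *ᵥ B⁻¹ *ᵥ x := by linarith [hAB (B⁻¹ *ᵥ x)]
    _ ≤ x ⬝ᵥ A⁻¹ *ᵥ x := hA.two_mul_dotProduct_sub_le x _

lemma inv_smul_one_loewner_inv {A : Matrix (Fin n) (Fin n) ℝ} (hA : A.PosDef) {c : ℝ}
    (hc : c ≠ 0) (h : Loewner A (c • 1)) : Loewner (c⁻¹ • 1) A⁻¹ := by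
  simpa [smul_one_inv hc] using h.inv_anti hA

lemma inv_smul_one_loewner_iciInfo {κ : Type*} [Fintype κ] {P : κ → Matrix (Fin n) (Fin n) ℝ}
    (hP : ∀ j, (P j).PosDef) {γ : ℝ} (hγ : γ ≠ 0) (hPγ : ∀ j, Loewner (P j) (γ • 1))
    {ω : κ → ℝ} (hω0 : ∀ j, 0 ≤ ω j) (hω1 : ∀ j, ((Fintype.card κ : ℝ) - 1) * ω j ≤ 1)
    (hωsum : ∑ j, ω j = 1) : Loewner (γ⁻¹ • 1) (iciInfo P ω) := by
  rw [loewner_iff (isHermitian_one.smul (IsSelfAdjoint.all _))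
    (isHermitian_iciInfo hP hω0 hωsum)]
  intro x
  set k : ℝ := (Fintype.card κ : ℝ)
  set q : κ → ℝ := fun j ↦ x ⬝ᵥ (P j)⁻¹ *ᵥ x
  have hq : ∀ j, γ⁻¹ * (x ⬝ᵥ x) ≤ q j := fun j ↦ by
    have := (loewner_iff (isHermitian_one.smul (IsSelfAdjoint.all _)) (hP j).inv.isHermitian).mp
      (inv_smul_one_loewner_inv (hP j) hγ (hPγ j)) x
    simpa only [dotProduct_smul_one_mulVec] using this
  have hk : 0 ≤ k - 1 := by
    obtain ⟨j⟩ : Nonempty κ := by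
      by_contra hκ
      simp [not_nonempty_iff.mp hκ] at hωsum
    exact sub_nonneg.mpr (Nat.one_le_cast.mpr (Fintype.card_pos_iff.mpr ⟨j⟩))
  calc x ⬝ᵥ (γ⁻¹ • 1 : Matrix (Fin n) (Fin n) ℝ) *ᵥ x
      = ∑ j, (1 - (k - 1) * ω j) * (γ⁻¹ * (x ⬝ᵥ x)) := by
        simp [dotProduct_smul_one_mulVec, ← Finset.sum_mul, ← Finset.mul_sum, hωsum, k]
    _ ≤ ∑ j, (1 - (k - 1) * ω j) * q j := Finset.sum_le_sum fun j _ ↦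
        mul_le_mul_of_nonneg_left (hq j) (sub_nonneg.mpr (hω1 j))
    _ = ∑ j, q j - (k - 1) * ∑ j, ω j * q j := by
        simp only [sub_mul, one_mul, Finset.sum_sub_distrib, Finset.mul_sum, mul_assoc]
    _ ≤ ∑ j, q j - (k - 1) * (x ⬝ᵥ (∑ j, ω j • P j)⁻¹ *ᵥ x) := by
        gcongr
        exact dotProduct_inv_sum_smul_mulVec_le hP hω0 hωsum x
    _ = x ⬝ᵥ iciInfo P ω *ᵥ x := (dotProduct_iciInfo_mulVec P ω x).symm

end Loewner

end Matrix

open Matrix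

theorem multi_ici_fused_bound_general
    {n m : ℕ}
    (P : Fin m → Matrix (Fin n) (Fin n) ℝ) (hP : ∀ j, (P j).PosDef)
    (γbar : ℝ) (hγ : 0 < γbar)
    (hPup : ∀ j, Matrix.Loewner (P j) (γbar • (1 : Matrix (Fin n) (Fin n) ℝ)))
    (ω : Fin m → ℝ) (hω0 : ∀ j, 0 ≤ ω j) (hω1 : ∀ j, ω j ≤ 1 / ((m : ℝ) - 1))
    (hωsum : ∑ j, ω j = 1)
    (PΓ : Matrix (Fin n) (Fin n) ℝ) (hPΓ : PΓ = ∑ j, ω j • P j) :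
    Matrix.Loewner ((1 / γbar) • (1 : Matrix (Fin n) (Fin n) ℝ))
      (∑ j, (P j)⁻¹ - ((m : ℝ) - 1) • PΓ⁻¹) ∧
    (∑ j, (P j)⁻¹ - ((m : ℝ) - 1) • PΓ⁻¹).PosDef ∧
    Matrix.Loewner (∑ j, (P j)⁻¹ - ((m : ℝ) - 1) • PΓ⁻¹)⁻¹
      (γbar • (1 : Matrix (Fin n) (Fin n) ℝ)) := by
  have hS : ∑ j, (P j)⁻¹ - ((m : ℝ) - 1) • PΓ⁻¹ = iciInfo P ω := by
    simp [iciInfo, hPΓ]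
  have hweight : ∀ j, ((Fintype.card (Fin m) : ℝ) - 1) * ω j ≤ 1 := fun j ↦ by
    rw [Fintype.card_fin, mul_comm]
    exact mul_le_of_le_div₀ zero_le_one (sub_nonneg.mpr (Nat.one_le_cast.mpr j.pos)) (hω1 j)
  have hlower := inv_smul_one_loewner_iciInfo hP hγ.ne' hPup hω0 hweight hωsum
  have hγI : (γbar⁻¹ • 1 : Matrix (Fin n) (Fin n) ℝ).PosDef := PosDef.one.smul (inv_pos.mpr hγ)
  rw [hS, one_div]
  refine ⟨hlower, hlower.posDef hγI, ?_⟩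
  simpa [smul_one_inv (inv_ne_zero hγ.ne')] using hlower.inv_anti hγI

/-- **Theorem 1, multi-fusion diffusion-update bound.** For `m ≥ 2` symmetric positive
definite matrices `Pⱼ ⪯ γ̄·I` and weights `0 ≤ ωⱼ ≤ 1/(m−1)` with `Σⱼ ωⱼ = 1`, the
multi-sensor ICI information matrix `Σⱼ (Pⱼ)⁻¹ − (m−1)(P_Γ)⁻¹` with `P_Γ = Σⱼ ωⱼ Pⱼ`
satisfies `⪰ (1/γ̄)·I`, is symmetric positive definite, and the fused covariance
`P̂ = (Σⱼ (Pⱼ)⁻¹ − (m−1)(P_Γ)⁻¹)⁻¹` satisfies `P̂ ⪯ γ̄·I`. -/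
theorem multi_ici_fused_bound
    {n m : ℕ} (hm : 2 ≤ m)
    (P : Fin m → Matrix (Fin n) (Fin n) ℝ) (hP : ∀ j, (P j).PosDef)
    (γbar : ℝ) (hγ : 0 < γbar)
    (hPup : ∀ j, Matrix.Loewner (P j) (γbar • (1 : Matrix (Fin n) (Fin n) ℝ)))
    (ω : Fin m → ℝ) (hω0 : ∀ j, 0 ≤ ω j) (hω1 : ∀ j, ω j ≤ 1 / ((m : ℝ) - 1))
    (hωsum : ∑ j, ω j = 1)
    (PΓ : Matrix (Fin n) (Fin n) ℝ) (hPΓ : PΓ = ∑ j, ω j • P j) :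
    Matrix.Loewner ((1 / γbar) • (1 : Matrix (Fin n) (Fin n) ℝ))
      (∑ j, (P j)⁻¹ - ((m : ℝ) - 1) • PΓ⁻¹) ∧
    (∑ j, (P j)⁻¹ - ((m : ℝ) - 1) • PΓ⁻¹).PosDef ∧
    Matrix.Loewner (∑ j, (P j)⁻¹ - ((m : ℝ) - 1) • PΓ⁻¹)⁻¹
      (γbar • (1 : Matrix (Fin n) (Fin n) ℝ)) :=
  multi_ici_fused_bound_general P hP γbar hγ hPup ω hω0 hω1 hωsum PΓ hPΓ
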